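/- arXiv:1607.03212 — 6 statements merged into one kernel-verified Lean document; each statement's English description precedes it below -/
import Mathlib

section
/- If (Q,&,1) is a divisible quantale, then for all a,b ∈ Q, (b⧹a)&a = a∧b = a&(a⧸b); consequently the underlying lattice Q is a frame and the unit 1 is the top element. -/
/-!
Writing `1 = ⊤ & b` by divisibility, associativity gives `⊤ = ⊤ & 1 = (⊤ & ⊤) & b = ⊤ & b = 1`,
so the quantale is integral: `x & a ≤ a` and `a & x ≤ a`. Divisibility then writes `a ⊓ b = a & c`
with `a & c ≤ b`, so `c ≤ a ⧸ b`, and integrality gives the reverse inequality. Factoring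
`a ⊓ ⨆ S = (⨆ S) & c` in the same way and distributing over `S` gives the frame law, since each
`s & c` lies below both `s` and `(⨆ S) & c ≤ a`.
-/

theorem monotone_of_map_sSup {α β : Type*} [CompleteLattice α] [CompleteLattice β] {f : α → β}
    (hf : ∀ S : Set α, f (sSup S) = ⨆ b ∈ S, f b) : Monotone f :=
  OrderHomClass.mono (⟨f, fun S => (hf S).trans sSup_image.symm⟩ : sSupHom α β)

section DivisibleQuantale

variable {Q : Type*} [CompleteLattice Q] {mul : Q → Q → Q}

theorem one_eq_top_of_divisible {one : Q} (hassoc : ∀ a b c : Q, mul (mul a b) c = mul a (mul b c))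
    (hunitr : ∀ a : Q, mul a one = a) (hmono : Monotone (mul ⊤))
    (hdiv : ∀ x y : Q, x ≤ y → ∃ c, mul y c = x) : one = ⊤ := by
  obtain ⟨b, hb⟩ := hdiv one ⊤ le_top
  have htop : mul ⊤ ⊤ = ⊤ := top_le_iff.1 <| (hunitr ⊤).symm.trans_le (hmono le_top)
  calc one = mul ⊤ b := hb.symm
    _ = mul (mul ⊤ ⊤) b := by rw [htop]
    _ = mul ⊤ one := by rw [hassoc, hb]
    _ = ⊤ := hunitr ⊤

theorem mul_le_left_of_mul_top (hunitr : ∀ a : Q, mul a ⊤ = a)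
    (hmono : ∀ a, Monotone (mul a)) (a x : Q) : mul a x ≤ a :=
  (hmono a le_top).trans_eq (hunitr a)

theorem mul_sSup_residual_eq_inf (hdistl : ∀ (a : Q) (S : Set Q), mul a (sSup S) = ⨆ b ∈ S, mul a b)
    (hint : ∀ a x : Q, mul a x ≤ a) (hdiv : ∀ x y : Q, x ≤ y → ∃ c, mul y c = x) (a b : Q) :
    mul a (sSup {z | mul a z ≤ b}) = a ⊓ b := by
  apply le_antisymm
  · rw [hdistl]
    exact iSup₂_le fun z hz => le_inf (hint a z) hz
  · obtain ⟨c, hc⟩ := hdiv (a ⊓ b) a inf_le_left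
    have hcb : mul a c ≤ b := hc ▸ inf_le_right
    exact hc.symm.trans_le (monotone_of_map_sSup (hdistl a) (le_sSup hcb))

theorem inf_sSup_le_iSup_inf_of_divisible
    (hdistr : ∀ (a : Q) (S : Set Q), mul (sSup S) a = ⨆ b ∈ S, mul b a)
    (hint : ∀ a x : Q, mul a x ≤ a) (hdiv : ∀ x y : Q, x ≤ y → ∃ c, mul y c = x)
    (a : Q) (S : Set Q) : a ⊓ sSup S ≤ ⨆ b ∈ S, a ⊓ b := by
  obtain ⟨c, hc⟩ := hdiv (a ⊓ sSup S) (sSup S) inf_le_right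
  rw [← hc, hdistr]
  refine iSup₂_le fun s hs => le_iSup₂_of_le s hs (le_inf ?_ (hint s c))
  calc mul s c ≤ mul (sSup S) c := monotone_of_map_sSup (f := (mul · c)) (hdistr c) (le_sSup hs)
    _ = a ⊓ sSup S := hc
    _ ≤ a := inf_le_left

end DivisibleQuantale

/-- In a divisible quantale, `(b ⧹ a) & a = a ⊓ b = a & (a ⧸ b)`;
consequently the underlying lattice is a frame and the unit is the top element. -/
theorem stmt1 {Q : Type*} [CompleteLattice Q] (mul : Q → Q → Q) (one : Q)
    (hassoc : ∀ a b c : Q, mul (mul a b) c = mul a (mul b c))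
    (hunitl : ∀ a : Q, mul one a = a) (hunitr : ∀ a : Q, mul a one = a)
    (hdistl : ∀ (a : Q) (S : Set Q), mul a (sSup S) = ⨆ b ∈ S, mul a b)
    (hdistr : ∀ (a : Q) (S : Set Q), mul (sSup S) a = ⨆ b ∈ S, mul b a)
    (hdiv : ∀ x y : Q, x ≤ y → ∃ a b : Q, mul a y = x ∧ mul y b = x) :
    (∀ a b : Q,
        mul (sSup {z | mul z a ≤ b}) a = a ⊓ b ∧ a ⊓ b = mul a (sSup {z | mul a z ≤ b})) ∧
      (∀ (a : Q) (S : Set Q), a ⊓ sSup S = ⨆ b ∈ S, a ⊓ b) ∧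
      one = ⊤ := by
  have hmonol a := monotone_of_map_sSup (hdistl a)
  have hmonor a := monotone_of_map_sSup (f := (mul · a)) (hdistr a)
  have hdivl x y hxy : ∃ c, mul c y = x := let ⟨c, _, hc, _⟩ := hdiv x y hxy; ⟨c, hc⟩
  have hdivr x y hxy : ∃ c, mul y c = x := let ⟨_, c, _, hc⟩ := hdiv x y hxy; ⟨c, hc⟩
  have hone := one_eq_top_of_divisible hassoc hunitr (hmonol ⊤) hdivr
  subst hone
  have hintr := mul_le_left_of_mul_top hunitr hmonol
  have hintl := mul_le_left_of_mul_top (mul := flip mul) hunitl hmonor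
  refine ⟨fun a b => ⟨?_, ?_⟩, fun a S => ?_, rfl⟩
  · exact mul_sSup_residual_eq_inf (mul := flip mul) hdistr hintl hdivl a b
  · exact (mul_sSup_residual_eq_inf hdistl hintr hdivr a b).symm
  · exact le_antisymm (inf_sSup_le_iSup_inf_of_divisible hdistr hintr hdivr a S)
      (iSup₂_le fun b hb => inf_le_inf_left a (le_sSup hb))
end

section
/- Let & be a continuous t-norm on [0,1] with residuation →, and let a be idempotent for &. Then for all b,c ∈ [0,1] with b < a ≤ c, one has c → b = b. -/
noncomputable def tres (f : ℝ → ℝ → ℝ) (x y : ℝ) : ℝ :=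
  sSup {z | z ∈ Set.Icc (0:ℝ) 1 ∧ f x z ≤ y}

def IsContTNorm (f : ℝ → ℝ → ℝ) : Prop :=
  (∀ a ∈ Set.Icc (0:ℝ) 1, ∀ b ∈ Set.Icc (0:ℝ) 1, f a b ∈ Set.Icc (0:ℝ) 1) ∧
  ContinuousOn (fun p : ℝ × ℝ => f p.1 p.2) (Set.Icc 0 1 ×ˢ Set.Icc 0 1) ∧
  (∀ a ∈ Set.Icc (0:ℝ) 1, ∀ b ∈ Set.Icc (0:ℝ) 1, f a b = f b a) ∧
  (∀ a ∈ Set.Icc (0:ℝ) 1, ∀ b ∈ Set.Icc (0:ℝ) 1, ∀ c ∈ Set.Icc (0:ℝ) 1,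
    f (f a b) c = f a (f b c)) ∧
  (∀ a ∈ Set.Icc (0:ℝ) 1, ∀ b ∈ Set.Icc (0:ℝ) 1, ∀ c ∈ Set.Icc (0:ℝ) 1,
    a ≤ b → f a c ≤ f b c) ∧
  (∀ a ∈ Set.Icc (0:ℝ) 1, f a 1 = a)

/-!
An idempotent `a` of a continuous t-norm acts as `z ↦ min a z`: for `z ≤ a`, the intermediate
value theorem writes `z = a & w`, and then `a & z = (a & a) & w = z`; for `z ≥ a`,
monotonicity squeezes `a & z` between `a & a = a` and `a`. Hence, when `b < a ≤ c`,
`c & z ≤ b` forces `min a z ≤ a & z ≤ b < a`, i.e. `z ≤ b`, while `c & b ≤ b` always holds;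
so `b` is the largest solution of `c & z ≤ b`.
-/

open Set

namespace IsContTNorm

variable {f : ℝ → ℝ → ℝ}

theorem apply_one_left (ht : IsContTNorm f) {y : ℝ} (hy : y ∈ Icc (0:ℝ) 1) : f 1 y = y := by
  rw [ht.2.2.1 1 (right_mem_Icc.2 zero_le_one) y hy, ht.2.2.2.2.2 y hy]

theorem monotone_right (ht : IsContTNorm f) {x y y' : ℝ} (hx : x ∈ Icc (0:ℝ) 1)
    (hy : y ∈ Icc (0:ℝ) 1) (hy' : y' ∈ Icc (0:ℝ) 1) (hyy' : y ≤ y') : f x y ≤ f x y' := by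
  rw [ht.2.2.1 x hx y hy, ht.2.2.1 x hx y' hy']
  exact ht.2.2.2.2.1 y hy y' hy' x hx hyy'

theorem apply_le_right (ht : IsContTNorm f) {x y : ℝ} (hx : x ∈ Icc (0:ℝ) 1)
    (hy : y ∈ Icc (0:ℝ) 1) : f x y ≤ y :=
  (ht.2.2.2.2.1 x hx 1 (right_mem_Icc.2 zero_le_one) y hy hx.2).trans_eq (ht.apply_one_left hy)

theorem apply_le_left (ht : IsContTNorm f) {x y : ℝ} (hx : x ∈ Icc (0:ℝ) 1)
    (hy : y ∈ Icc (0:ℝ) 1) : f x y ≤ x :=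
  ht.2.2.1 x hx y hy ▸ ht.apply_le_right hy hx

theorem apply_zero_right (ht : IsContTNorm f) {x : ℝ} (hx : x ∈ Icc (0:ℝ) 1) : f x 0 = 0 :=
  le_antisymm (ht.apply_le_right hx (left_mem_Icc.2 zero_le_one))
    (ht.1 x hx 0 (left_mem_Icc.2 zero_le_one)).1

theorem continuousOn_right (ht : IsContTNorm f) {x : ℝ} (hx : x ∈ Icc (0:ℝ) 1) :
    ContinuousOn (f x) (Icc 0 1) :=
  ht.2.1.comp (by fun_prop) fun _ hy => mk_mem_prod hx hy

theorem apply_eq_min_of_idempotent (ht : IsContTNorm f) {a z : ℝ} (ha : a ∈ Icc (0:ℝ) 1)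
    (hid : f a a = a) (hz : z ∈ Icc (0:ℝ) 1) : f a z = min a z := by
  rcases le_total z a with hza | haz
  · obtain ⟨w, hw, rfl⟩ : ∃ w ∈ Icc 0 a, f a w = z := by
      refine intermediate_value_Icc ha.1 ((ht.continuousOn_right ha).mono
        (Icc_subset_Icc le_rfl ha.2)) ?_
      rw [ht.apply_zero_right ha, hid]
      exact ⟨hz.1, hza⟩
    have hw₁ : w ∈ Icc (0:ℝ) 1 := ⟨hw.1, hw.2.trans ha.2⟩
    rw [min_eq_right hza, ← ht.2.2.2.1 a ha a ha w hw₁, hid]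
  · rw [min_eq_left haz]
    exact le_antisymm (ht.apply_le_left ha hz) (hid.symm.trans_le (ht.monotone_right ha ha hz haz))

end IsContTNorm

/-- if `a` is idempotent and `b < a ≤ c`, then `c → b = b`. -/
theorem stmt3 (f : ℝ → ℝ → ℝ) (ht : IsContTNorm f) (a : ℝ) (ha : a ∈ Set.Icc (0:ℝ) 1)
    (hid : f a a = a) :
    ∀ b ∈ Set.Icc (0:ℝ) 1, ∀ c ∈ Set.Icc (0:ℝ) 1, b < a → a ≤ c → tres f c b = b := by
  intro b hb c hc hba hac
  refine IsGreatest.csSup_eq ⟨⟨hb, ht.apply_le_right hc hb⟩, ?_⟩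
  rintro z ⟨hz, hczb⟩
  have hmin : min a z ≤ b := calc
    min a z = f a z := (ht.apply_eq_min_of_idempotent ha hid hz).symm
    _ ≤ f c z := ht.2.2.2.2.1 a ha c hc z hz hac
    _ ≤ b := hczb
  exact (min_le_iff.1 hmin).resolve_left hba.not_ge
end

section
/- Let Q = ([0,1],&,1) with & a continuous t-norm, and let A be a D(Q)-category (ordered fuzzy set). If {x_λ} is a biCauchy net in A and x is a Yoneda limit of {x_λ}, then x is a bilimit of {x_λ}; conversely, if x is a bilimit of a biCauchy net {x_λ}, then x is a Yoneda limit of {x_λ}. -/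
open Set Filter

/-- A D(Q)-category (ordered fuzzy set) valued in `([0,1], f, 1)`. -/
def IsDCat {α : Type*} (f : ℝ → ℝ → ℝ) (A : α → α → ℝ) : Prop :=
  (∀ x y, A x y ∈ Set.Icc (0:ℝ) 1) ∧
  (∀ x y, A x y ≤ min (A x x) (A y y)) ∧
  (∀ x y z, f (tres f (A y y) (A y z)) (A x y) ≤ A x z)

/-- A net is forward Cauchy if `lim_{ν ≥ μ} A(x_μ, x_ν)` exists. -/
def FwdCauchy {α : Type*} {Λ : Type*} [Preorder Λ] (A : α → α → ℝ) (x : Λ → α) : Prop :=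
  ∃ L : ℝ, Filter.Tendsto (fun q : Λ × Λ => A (x q.1) (x q.2))
    (Filter.atTop ⊓ Filter.principal {q : Λ × Λ | q.1 ≤ q.2}) (nhds L)

/-- A net is biCauchy if `lim_{μ,ν} A(x_μ, x_ν)` exists. -/
def BiCauchy {α : Type*} {Λ : Type*} [Preorder Λ] (A : α → α → ℝ) (x : Λ → α) : Prop :=
  ∃ L : ℝ, Filter.Tendsto (fun q : Λ × Λ => A (x q.1) (x q.2)) Filter.atTop (nhds L)

/-- The type `⋁_λ ⋀_{μ ≥ λ} A(x_μ, x_μ)` of a net. -/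
noncomputable def genType {α : Type*} {Λ : Type*} [Preorder Λ]
    (A : α → α → ℝ) (x : Λ → α) : ℝ :=
  ⨆ l : Λ, ⨅ σ : {σ : Λ // l ≤ σ}, A (x σ.1) (x σ.1)

/-- The weight `⋁_λ ⋀_{μ ≥ λ} A(−, x_μ)` generated by a net. -/
noncomputable def genWeight {α : Type*} {Λ : Type*} [Preorder Λ]
    (A : α → α → ℝ) (x : Λ → α) : α → ℝ :=
  fun u => ⨆ l : Λ, ⨅ σ : {σ : Λ // l ≤ σ}, A u (x σ.1)

/-- The coweight `⋁_λ ⋀_{μ ≥ λ} A(x_μ, −)` generated by a net. -/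
noncomputable def genCoweight {α : Type*} {Λ : Type*} [Preorder Λ]
    (A : α → α → ℝ) (x : Λ → α) : α → ℝ :=
  fun v => ⨆ l : Λ, ⨅ σ : {σ : Λ // l ≤ σ}, A (x σ.1) v

/-- `s` is a Yoneda limit of the net `x`. -/
noncomputable def YonedaLim {α : Type*} {Λ : Type*} [Preorder Λ]
    (A : α → α → ℝ) (x : Λ → α) (s : α) : Prop :=
  A s s = genType A x ∧ ∀ y, A s y = genCoweight A x y

/-- `s` is a bilimit of the net `x`. -/
noncomputable def BiLim {α : Type*} {Λ : Type*} [Preorder Λ]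
    (A : α → α → ℝ) (x : Λ → α) (s : α) : Prop :=
  A s s = genCoweight A x s ∧ A s s = genWeight A x s ∧ A s s = genType A x




section TN
variable {f : ℝ → ℝ → ℝ} (ht : IsContTNorm f)
include ht

lemma tn_mem {a b : ℝ} (ha : a ∈ Icc (0:ℝ) 1) (hb : b ∈ Icc (0:ℝ) 1) :
    f a b ∈ Icc (0:ℝ) 1 := ht.1 a ha b hb

lemma tn_comm {a b : ℝ} (ha : a ∈ Icc (0:ℝ) 1) (hb : b ∈ Icc (0:ℝ) 1) :
    f a b = f b a := ht.2.2.1 a ha b hb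

lemma tn_mono1 {a b c : ℝ} (ha : a ∈ Icc (0:ℝ) 1) (hb : b ∈ Icc (0:ℝ) 1)
    (hc : c ∈ Icc (0:ℝ) 1) (h : a ≤ b) : f a c ≤ f b c := ht.2.2.2.2.1 a ha b hb c hc h

lemma tn_unit1 {a : ℝ} (ha : a ∈ Icc (0:ℝ) 1) : f a 1 = a := ht.2.2.2.2.2 a ha

lemma tn_mono2 {a b c : ℝ} (ha : a ∈ Icc (0:ℝ) 1) (hb : b ∈ Icc (0:ℝ) 1)
    (hc : c ∈ Icc (0:ℝ) 1) (h : b ≤ c) : f a b ≤ f a c := by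
  rw [tn_comm ht ha hb, tn_comm ht ha hc]; exact tn_mono1 ht hb hc ha h

lemma tn_unit2 {a : ℝ} (ha : a ∈ Icc (0:ℝ) 1) : f 1 a = a := by
  rw [tn_comm ht (by norm_num) ha]; exact tn_unit1 ht ha

lemma tn_zero2 {a : ℝ} (ha : a ∈ Icc (0:ℝ) 1) : f a 0 = 0 := by
  have h1 : f a 0 ≤ f 1 0 := tn_mono1 ht ha (by norm_num) (by norm_num) ha.2
  have h2 : f 1 0 = 0 := tn_unit2 ht (by norm_num)
  have h3 : (0:ℝ) ≤ f a 0 := (tn_mem ht ha (by norm_num)).1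
  linarith

lemma tn_cont2 {t : ℝ} (htt : t ∈ Icc (0:ℝ) 1) :
    ContinuousOn (fun z => f t z) (Icc (0:ℝ) 1) := by
  have : (fun z => f t z) = (fun p : ℝ × ℝ => f p.1 p.2) ∘ (fun z => (t, z)) := rfl
  rw [this]
  exact ht.2.1.comp (Continuous.continuousOn (by continuity))
    (fun z hz => Set.mk_mem_prod htt hz)

-- residuation set
lemma tres_zero_mem {t a : ℝ} (htt : t ∈ Icc (0:ℝ) 1) (ha0 : 0 ≤ a) :
    (0:ℝ) ∈ {z | z ∈ Icc (0:ℝ) 1 ∧ f t z ≤ a} :=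
  ⟨by norm_num, by rw [tn_zero2 ht htt]; exact ha0⟩

omit ht in
lemma tres_bddAbove (t a : ℝ) : BddAbove {z | z ∈ Icc (0:ℝ) 1 ∧ f t z ≤ a} :=
  ⟨1, fun z hz => hz.1.2⟩

lemma tres_mem_Icc {t a : ℝ} (htt : t ∈ Icc (0:ℝ) 1) (ha0 : 0 ≤ a) :
    tres f t a ∈ Icc (0:ℝ) 1 := by
  constructor
  · exact le_csSup (tres_bddAbove (f := f) t a) (tres_zero_mem ht htt ha0)
  · exact csSup_le ⟨0, tres_zero_mem ht htt ha0⟩ (fun z hz => hz.1.2)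

lemma tres_mono {t t' a a' : ℝ} (htt : t ∈ Icc (0:ℝ) 1) (htt' : t' ∈ Icc (0:ℝ) 1)
    (ha0 : 0 ≤ a) (hta : t' ≤ t) (haa : a ≤ a') : tres f t a ≤ tres f t' a' := by
  apply csSup_le_csSup (tres_bddAbove (f := f) t' a') ⟨0, tres_zero_mem ht htt ha0⟩
  rintro z ⟨hz1, hz2⟩
  exact ⟨hz1, le_trans (tn_mono1 ht htt' htt hz1 hta) (le_trans hz2 haa)⟩

/-- divisibility: `a ≤ t` implies `f t (tres f t a) = a`. -/
lemma tn_div {t a : ℝ} (htt : t ∈ Icc (0:ℝ) 1) (ha : a ∈ Icc (0:ℝ) 1) (hat : a ≤ t) :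
    f t (tres f t a) = a := by
  set S := {z | z ∈ Icc (0:ℝ) 1 ∧ f t z ≤ a} with hS
  have hne : S.Nonempty := ⟨0, tres_zero_mem ht htt ha.1⟩
  have hcl : IsClosed S := by
    have : S = Icc (0:ℝ) 1 ∩ (fun z => f t z) ⁻¹' (Iic a) := by
      ext z
      constructor
      · rintro ⟨h1, h2⟩; exact ⟨h1, h2⟩
      · rintro ⟨h1, h2⟩; exact ⟨h1, h2⟩
    rw [this]
    exact (tn_cont2 ht htt).preimage_isClosed_of_isClosed isClosed_Icc isClosed_Iic
  have hmem : tres f t a ∈ S := hcl.csSup_mem hne (tres_bddAbove (f := f) t a)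
  have hle : f t (tres f t a) ≤ a := hmem.2
  -- IVT for the other direction
  have h0 : f t 0 = 0 := tn_zero2 ht htt
  have h1 : f t 1 = t := tn_unit1 ht htt
  have := intermediate_value_Icc (by norm_num : (0:ℝ) ≤ 1) (tn_cont2 ht htt)
  have haI : a ∈ Icc (f t 0) (f t 1) := by rw [h0, h1]; exact ⟨ha.1, hat⟩
  obtain ⟨z, hz1, hz2⟩ := this haI
  have hzS : z ∈ S := ⟨hz1, le_of_eq hz2⟩
  have hzle : z ≤ tres f t a := le_csSup (tres_bddAbove (f := f) t a) hzS
  have : f t z ≤ f t (tres f t a) :=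
    tn_mono2 ht htt hz1 (tres_mem_Icc ht htt ha.1) hzle
  simp only [hz2] at this
  linarith

end TN

section LimInf
variable {Λ : Type*} [Nonempty Λ] [SemilatticeSup Λ]

lemma liminfD_bddBelow (g : Λ → ℝ) (hb : ∀ σ, g σ ∈ Icc (0:ℝ) 1) (l : Λ) :
    BddBelow (Set.range fun σ : {σ : Λ // l ≤ σ} => g σ.1) :=
  ⟨0, by rintro _ ⟨σ, rfl⟩; exact (hb σ.1).1⟩

lemma liminfD_inner_le (g : Λ → ℝ) (hb : ∀ σ, g σ ∈ Icc (0:ℝ) 1) (l : Λ) {σ : Λ}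
    (hσ : l ≤ σ) : (⨅ τ : {τ : Λ // l ≤ τ}, g τ.1) ≤ g σ :=
  ciInf_le (liminfD_bddBelow g hb l) ⟨σ, hσ⟩

lemma liminfD_bddAbove (g : Λ → ℝ) (hb : ∀ σ, g σ ∈ Icc (0:ℝ) 1) :
    BddAbove (Set.range fun l : Λ => ⨅ σ : {σ : Λ // l ≤ σ}, g σ.1) := by
  refine ⟨1, ?_⟩
  rintro _ ⟨l, rfl⟩
  exact le_trans (liminfD_inner_le g hb l (le_refl l)) (hb l).2

lemma liminfD_ge (g : Λ → ℝ) (hb : ∀ σ, g σ ∈ Icc (0:ℝ) 1) {c : ℝ} {l₀ : Λ}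
    (h : ∀ σ, l₀ ≤ σ → c ≤ g σ) :
    c ≤ ⨆ l : Λ, ⨅ σ : {σ : Λ // l ≤ σ}, g σ.1 := by
  refine le_trans ?_ (le_ciSup (liminfD_bddAbove g hb) l₀)
  exact le_ciInf fun σ => h σ.1 σ.2

lemma liminfD_le (g : Λ → ℝ) (hb : ∀ σ, g σ ∈ Icc (0:ℝ) 1) {c : ℝ}
    (h : ∀ l, ∃ σ, l ≤ σ ∧ g σ ≤ c) :
    (⨆ l : Λ, ⨅ σ : {σ : Λ // l ≤ σ}, g σ.1) ≤ c := by
  refine ciSup_le fun l => ?_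
  obtain ⟨σ, hσ, hgσ⟩ := h l
  exact le_trans (liminfD_inner_le g hb l hσ) hgσ

lemma liminfD_extract (g : Λ → ℝ) (hb : ∀ σ, g σ ∈ Icc (0:ℝ) 1) {c : ℝ}
    (h : c < ⨆ l : Λ, ⨅ σ : {σ : Λ // l ≤ σ}, g σ.1) :
    ∃ l₀, ∀ σ, l₀ ≤ σ → c ≤ g σ := by
  obtain ⟨l₀, hl₀⟩ := exists_lt_of_lt_ciSup h
  exact ⟨l₀, fun σ hσ => le_trans hl₀.le (liminfD_inner_le g hb l₀ hσ)⟩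

lemma liminfD_eq_of_tendsto (g : Λ → ℝ) (hb : ∀ σ, g σ ∈ Icc (0:ℝ) 1) {L : ℝ}
    (h : Filter.Tendsto g Filter.atTop (nhds L)) :
    (⨆ l : Λ, ⨅ σ : {σ : Λ // l ≤ σ}, g σ.1) = L := by
  have key : ∀ ε : ℝ, 0 < ε → ∃ l₀ : Λ, ∀ σ, l₀ ≤ σ → |g σ - L| < ε := by
    intro ε hε
    have := (Metric.tendsto_nhds.mp h) ε hε
    rw [Filter.eventually_atTop] at this
    obtain ⟨l₀, hl₀⟩ := this
    exact ⟨l₀, fun σ hσ => by simpa [Real.dist_eq] using hl₀ σ hσ⟩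
  refine le_antisymm ?_ ?_
  · apply le_of_forall_pos_le_add
    intro ε hε
    obtain ⟨l₀, hl₀⟩ := key ε hε
    refine liminfD_le g hb fun l => ⟨l ⊔ l₀, le_sup_left, ?_⟩
    have := hl₀ (l ⊔ l₀) le_sup_right
    rw [abs_lt] at this; linarith
  · apply le_of_forall_pos_le_add
    intro ε hε
    obtain ⟨l₀, hl₀⟩ := key ε hε
    have : L - ε ≤ ⨆ l : Λ, ⨅ σ : {σ : Λ // l ≤ σ}, g σ.1 := by
      refine liminfD_ge g hb (l₀ := l₀) fun σ hσ => ?_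
      have := hl₀ σ hσ; rw [abs_lt] at this; linarith
    linarith

end LimInf

section Key
variable {f : ℝ → ℝ → ℝ} (ht : IsContTNorm f)
include ht

lemma tn_tendsto {u v : ℕ → ℝ} {a b : ℝ} (hu : ∀ n, u n ∈ Icc (0:ℝ) 1)
    (hv : ∀ n, v n ∈ Icc (0:ℝ) 1) (ha : a ∈ Icc (0:ℝ) 1) (hb : b ∈ Icc (0:ℝ) 1)
    (hua : Filter.Tendsto u Filter.atTop (nhds a))
    (hvb : Filter.Tendsto v Filter.atTop (nhds b)) :
    Filter.Tendsto (fun n => f (u n) (v n)) Filter.atTop (nhds (f a b)) := by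
  have hcw : Filter.Tendsto (fun p : ℝ × ℝ => f p.1 p.2)
      (nhdsWithin (a, b) (Icc (0:ℝ) 1 ×ˢ Icc (0:ℝ) 1)) (nhds (f a b)) :=
    (ht.2.1 (a, b) (Set.mk_mem_prod ha hb)).tendsto
  have hseq : Filter.Tendsto (fun n => (u n, v n)) Filter.atTop
      (nhdsWithin (a, b) (Icc (0:ℝ) 1 ×ˢ Icc (0:ℝ) 1)) := by
    rw [tendsto_nhdsWithin_iff]
    exact ⟨hua.prodMk_nhds hvb,
      Filter.Eventually.of_forall fun n => Set.mk_mem_prod (hu n) (hv n)⟩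
  exact hcw.comp hseq

/-- the key limit lemma for the hard direction. -/
lemma key_le {L a D : ℝ} (hL : L ∈ Icc (0:ℝ) 1) (ha : a ∈ Icc (0:ℝ) 1) (haL : a ≤ L)
    (hD : D ∈ Icc (0:ℝ) 1)
    (h : ∀ ε : ℝ, 0 < ε → ε ≤ 1 → f (tres f (min (L + ε) 1) a) (max (L - ε) 0) ≤ D) :
    a ≤ D := by
  set c : ℕ → ℝ := fun n => tres f (min (L + 1 / (n + 1)) 1) a with hc
  have hposn : ∀ n : ℕ, (0:ℝ) < 1 / (n + 1) := fun n => by positivity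
  have hmin_mem : ∀ n : ℕ, min (L + 1 / (n + 1)) 1 ∈ Icc (0:ℝ) 1 := fun n =>
    ⟨le_min (by have := hposn n; linarith [hL.1]) zero_le_one, min_le_right _ _⟩
  have hcmem : ∀ n, c n ∈ Icc (0:ℝ) 1 := fun n => tres_mem_Icc ht (hmin_mem n) ha.1
  have hcmono : Monotone c := by
    intro n m hnm
    apply tres_mono ht (hmin_mem n) (hmin_mem m) ha.1 _ (le_refl a)
    apply min_le_min _ (le_refl 1)
    have : (1:ℝ) / (m + 1) ≤ 1 / (n + 1) := by
      apply one_div_le_one_div_of_le (by positivity)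
      exact_mod_cast by exact_mod_cast add_le_add_left (Nat.cast_le.mpr hnm) 1
    linarith
  have hbdd : BddAbove (Set.range c) := ⟨1, by rintro _ ⟨n, rfl⟩; exact (hcmem n).2⟩
  set c₀ := ⨆ n, c n with hc₀
  have hc₀mem : c₀ ∈ Icc (0:ℝ) 1 :=
    ⟨le_trans (hcmem 0).1 (le_ciSup hbdd 0), ciSup_le fun n => (hcmem n).2⟩
  have hctend : Filter.Tendsto c Filter.atTop (nhds c₀) := tendsto_atTop_ciSup hcmono hbdd
  -- second sequence
  set w : ℕ → ℝ := fun n => max (L - 1 / (n + 1)) 0 with hw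
  have hwmem : ∀ n, w n ∈ Icc (0:ℝ) 1 := fun n =>
    ⟨le_max_right _ _, max_le (by linarith [hL.2, (hposn n).le]) zero_le_one⟩
  have hwtend : Filter.Tendsto w Filter.atTop (nhds L) := by
    have h1 : Filter.Tendsto (fun n : ℕ => L - 1 / (n + 1)) Filter.atTop (nhds (L - 0)) :=
      tendsto_const_nhds.sub tendsto_one_div_add_atTop_nhds_zero_nat
    rw [sub_zero] at h1
    have := h1.max (tendsto_const_nhds (x := (0:ℝ)) (f := Filter.atTop (α := ℕ)))
    rwa [max_eq_left hL.1] at this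
  have hftend : Filter.Tendsto (fun n => f (c n) (w n)) Filter.atTop (nhds (f c₀ L)) :=
    tn_tendsto ht hcmem hwmem hc₀mem hL hctend hwtend
  have hfD : f c₀ L ≤ D := by
    refine le_of_tendsto hftend (Filter.Eventually.of_forall fun n => ?_)
    exact h (1 / (n + 1)) (hposn n) (by
      rw [div_le_one (by positivity)]; linarith [Nat.cast_nonneg (α := ℝ) n])
  -- now show a ≤ f c₀ L by contradiction
  by_contra hcon
  push_neg at hcon
  have hlt : f c₀ L < a := lt_of_le_of_lt hfD hcon
  have hgc : ContinuousOn (fun z => f z L) (Icc c₀ 1) := by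
    have heq : (fun z : ℝ => f z L) = (fun p : ℝ × ℝ => f p.1 p.2) ∘ (fun z => (z, L)) := rfl
    rw [heq]
    exact (ht.2.1.comp (Continuous.continuousOn (by continuity))
      (fun z hz => Set.mk_mem_prod hz hL)).mono (Icc_subset_Icc hc₀mem.1 (le_refl 1))
  have hg1 : f 1 L = L := tn_unit2 ht hL
  set v := (f c₀ L + a) / 2 with hv'
  have hv1 : f c₀ L < v := by rw [hv']; linarith
  have hv2 : v < a := by rw [hv']; linarith
  have hvI : v ∈ Icc (f c₀ L) (f 1 L) := ⟨hv1.le, by rw [hg1]; linarith⟩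
  obtain ⟨c', hc'I, hc'v⟩ := intermediate_value_Icc hc₀mem.2 hgc hvI
  simp only at hc'v
  have hc'gt : c₀ < c' := by
    rcases lt_or_eq_of_le hc'I.1 with h' | h'
    · exact h'
    · exfalso; rw [← h'] at hc'v; linarith
  have hc'mem : c' ∈ Icc (0:ℝ) 1 := ⟨le_trans hc₀mem.1 hc'I.1, hc'I.2⟩
  -- continuity of t ↦ f t c' at L
  have hmtend : Filter.Tendsto (fun n : ℕ => min (L + 1 / (n + 1)) 1) Filter.atTop (nhds L) := by
    have h1 : Filter.Tendsto (fun n : ℕ => L + 1 / (n + 1)) Filter.atTop (nhds (L + 0)) :=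
      tendsto_const_nhds.add tendsto_one_div_add_atTop_nhds_zero_nat
    rw [add_zero] at h1
    have := h1.min (tendsto_const_nhds (x := (1:ℝ)) (f := Filter.atTop (α := ℕ)))
    rwa [min_eq_left hL.2] at this
  have hfc'tend : Filter.Tendsto (fun n : ℕ => f (min (L + 1 / (n + 1)) 1) c')
      Filter.atTop (nhds (f L c')) :=
    tn_tendsto ht hmin_mem (fun _ => hc'mem) hL hc'mem hmtend tendsto_const_nhds
  have hfLc' : f L c' < a := by rw [tn_comm ht hL hc'mem]; rw [hc'v]; exact hv2
  have hev : ∀ᶠ n : ℕ in Filter.atTop, f (min (L + 1 / (n + 1)) 1) c' < a :=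
    hfc'tend.eventually (eventually_lt_nhds hfLc')
  obtain ⟨n, hn⟩ := hev.exists
  have hc'S : c' ∈ {z | z ∈ Icc (0:ℝ) 1 ∧ f (min (L + 1 / (n + 1)) 1) z ≤ a} :=
    ⟨hc'mem, hn.le⟩
  have : c' ≤ c n := le_csSup (tres_bddAbove (f := f) _ a) hc'S
  have : c' ≤ c₀ := le_trans this (le_ciSup hbdd n)
  linarith

end Key

section Approx
variable {f : ℝ → ℝ → ℝ} (ht : IsContTNorm f)
include ht

lemma tn_approx {c L D : ℝ} (hc : c ∈ Icc (0:ℝ) 1) (hL : L ∈ Icc (0:ℝ) 1)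
    (h : ∀ ε : ℝ, 0 < ε → f c (max (L - ε) 0) ≤ D) : f c L ≤ D := by
  set w : ℕ → ℝ := fun n => max (L - 1 / (n + 1)) 0 with hw
  have hposn : ∀ n : ℕ, (0:ℝ) < 1 / (n + 1) := fun n => by positivity
  have hwmem : ∀ n, w n ∈ Icc (0:ℝ) 1 := fun n =>
    ⟨le_max_right _ _, max_le (by linarith [hL.2, (hposn n).le]) zero_le_one⟩
  have hwtend : Filter.Tendsto w Filter.atTop (nhds L) := by
    have h1 : Filter.Tendsto (fun n : ℕ => L - 1 / (n + 1)) Filter.atTop (nhds (L - 0)) :=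
      tendsto_const_nhds.sub tendsto_one_div_add_atTop_nhds_zero_nat
    rw [sub_zero] at h1
    have := h1.max (tendsto_const_nhds (x := (0:ℝ)) (f := Filter.atTop (α := ℕ)))
    rwa [max_eq_left hL.1] at this
  have hftend : Filter.Tendsto (fun n => f c (w n)) Filter.atTop (nhds (f c L)) :=
    tn_tendsto ht (fun _ => hc) hwmem hc hL tendsto_const_nhds hwtend
  exact le_of_tendsto hftend (Filter.Eventually.of_forall fun n => h _ (hposn n))

end Approx

/-- for a biCauchy net in a D(Q)-category over a continuous t-norm,
an element is a Yoneda limit iff it is a bilimit. -/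
theorem stmt9 (f : ℝ → ℝ → ℝ) (ht : IsContTNorm f)
    {α : Type*} (A : α → α → ℝ) (hA : IsDCat f A)
    {Λ : Type*} [Nonempty Λ] [SemilatticeSup Λ] (x : Λ → α)
    (hbi : BiCauchy A x) (s : α) :
    YonedaLim A x s ↔ BiLim A x s := by
  obtain ⟨L, hLt⟩ := hbi
  obtain ⟨hmemA, hminA, hax⟩ := hA
  -- the diagonal converges to L
  have hdiagmap : Filter.Tendsto (fun σ : Λ => ((σ, σ) : Λ × Λ)) Filter.atTop Filter.atTop := by
    rw [← prod_atTop_atTop_eq]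
    exact Filter.tendsto_id.prodMk Filter.tendsto_id
  have hdiag : Filter.Tendsto (fun σ : Λ => A (x σ) (x σ)) Filter.atTop (nhds L) :=
    hLt.comp hdiagmap
  have hLmem : L ∈ Icc (0:ℝ) 1 :=
    isClosed_Icc.mem_of_tendsto hdiag (Filter.Eventually.of_forall fun σ => hmemA _ _)
  have hbdiag : ∀ σ : Λ, A (x σ) (x σ) ∈ Icc (0:ℝ) 1 := fun σ => hmemA _ _
  have hT : genType A x = L := liminfD_eq_of_tendsto _ hbdiag hdiag
  have hF2 : ∀ ε : ℝ, 0 < ε → ∃ l₀ : Λ, ∀ μ ν, l₀ ≤ μ → l₀ ≤ ν →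
      |A (x μ) (x ν) - L| < ε := by
    intro ε hε
    have := (Metric.tendsto_nhds.mp hLt) ε hε
    rw [Filter.eventually_atTop] at this
    obtain ⟨q₀, hq₀⟩ := this
    refine ⟨q₀.1 ⊔ q₀.2, fun μ ν h1 h2 => ?_⟩
    have := hq₀ (μ, ν) (Prod.le_def.mpr ⟨le_trans le_sup_left h1, le_trans le_sup_right h2⟩)
    simpa [Real.dist_eq] using this
  constructor
  · -- Yoneda limit → bilimit
    rintro ⟨hY1, hY2⟩
    have hAs : A s s = L := hY1.trans hT
    refine ⟨hY2 s, ?_, hY1⟩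
    -- A s s = genWeight A x s
    have hb : ∀ σ : Λ, A s (x σ) ∈ Icc (0:ℝ) 1 := fun σ => hmemA _ _
    refine le_antisymm ?_ ?_
    · -- A s s ≤ genWeight
      apply le_of_forall_pos_le_add
      intro ε hε
      obtain ⟨l₀, hl₀⟩ := hF2 ε hε
      have hstep : ∀ σ, l₀ ≤ σ → L - ε ≤ A s (x σ) := by
        intro σ hσ
        rw [hY2 (x σ)]
        refine liminfD_ge (fun μ => A (x μ) (x σ)) (fun μ => hmemA _ _) (l₀ := l₀) ?_
        intro μ hμ
        have := hl₀ μ σ hμ hσ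
        rw [abs_lt] at this; linarith
      have : L - ε ≤ genWeight A x s := liminfD_ge _ hb hstep
      rw [hAs]; linarith
    · -- genWeight ≤ A s s
      refine liminfD_le _ hb fun l => ⟨l, le_refl l, ?_⟩
      exact le_trans (hminA s (x l)) (min_le_left _ _)
  · -- bilimit → Yoneda limit
    rintro ⟨hB1, hB2, hB3⟩
    have hAs : A s s = L := hB3.trans hT
    refine ⟨hB3, fun y => ?_⟩
    have hE1 : ∀ ε : ℝ, 0 < ε → ∃ l₁ : Λ, ∀ σ, l₁ ≤ σ → L - ε ≤ A (x σ) s := by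
      intro ε hε
      have hlt : L - ε < genCoweight A x s := by rw [← hB1, hAs]; linarith
      exact liminfD_extract (fun σ => A (x σ) s) (fun σ => hmemA _ _) hlt
    have hE2 : ∀ ε : ℝ, 0 < ε → ∃ l₂ : Λ, ∀ σ, l₂ ≤ σ → L - ε ≤ A s (x σ) := by
      intro ε hε
      have hlt : L - ε < genWeight A x s := by rw [← hB2, hAs]; linarith
      exact liminfD_extract (fun σ => A s (x σ)) (fun σ => hmemA _ _) hlt
    have hmax_mem : ∀ ε : ℝ, 0 < ε → max (L - ε) 0 ∈ Icc (0:ℝ) 1 := fun ε hε =>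
      ⟨le_max_right _ _, max_le (by linarith [hLmem.2]) zero_le_one⟩
    refine le_antisymm ?_ ?_
    · -- A s y ≤ genCoweight A x y
      have hAsyL : A s y ≤ L := by
        rw [← hAs]; exact le_trans (hminA s y) (min_le_left _ _)
      set c := tres f L (A s y) with hc
      have hcmem : c ∈ Icc (0:ℝ) 1 := tres_mem_Icc ht hLmem (hmemA s y).1
      have hstep : ∀ ε : ℝ, 0 < ε → f c (max (L - ε) 0) ≤ genCoweight A x y := by
        intro ε hε
        obtain ⟨l₁, hl₁⟩ := hE1 ε hε
        refine liminfD_ge (fun σ => A (x σ) y) (fun σ => hmemA _ _) (l₀ := l₁) ?_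
        intro μ hμ
        have h1 : f (tres f (A s s) (A s y)) (A (x μ) s) ≤ A (x μ) y := hax (x μ) s y
        rw [hAs] at h1
        refine le_trans ?_ h1
        exact tn_mono2 ht hcmem (hmax_mem ε hε) (hmemA _ _)
          (max_le (hl₁ μ hμ) (hmemA _ _).1)
      have hkey : f c L ≤ genCoweight A x y := tn_approx ht hcmem hLmem hstep
      have hdiv : f L c = A s y := tn_div ht hLmem (hmemA s y) hAsyL
      rw [tn_comm ht hcmem hLmem, hdiv] at hkey
      exact hkey
    · -- genCoweight A x y ≤ A s y
      show (⨆ l : Λ, ⨅ σ : {σ : Λ // l ≤ σ}, A (x σ.1) y) ≤ A s y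
      refine ciSup_le fun l => ?_
      set a := ⨅ σ : {σ : Λ // l ≤ σ}, A (x σ.1) y with ha'
      have hainner : ∀ σ : Λ, l ≤ σ → a ≤ A (x σ) y := fun σ hσ =>
        liminfD_inner_le (fun σ => A (x σ) y) (fun σ => hmemA _ _) l hσ
      have hamem : a ∈ Icc (0:ℝ) 1 :=
        ⟨le_ciInf fun σ => (hmemA _ _).1, le_trans (hainner l (le_refl l)) (hmemA _ _).2⟩
      have haL : a ≤ L := by
        apply le_of_forall_pos_le_add
        intro ε hε
        obtain ⟨l₀, hl₀⟩ := hF2 ε hε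
        have h1 : a ≤ A (x (l ⊔ l₀)) y := hainner _ le_sup_left
        have h2 : A (x (l ⊔ l₀)) y ≤ A (x (l ⊔ l₀)) (x (l ⊔ l₀)) :=
          le_trans (hminA _ _) (min_le_left _ _)
        have h3 := hl₀ (l ⊔ l₀) (l ⊔ l₀) le_sup_right le_sup_right
        rw [abs_lt] at h3; linarith
      refine key_le ht hLmem hamem haL (hmemA s y) ?_
      intro ε hε hε1
      obtain ⟨l₀, hl₀⟩ := hF2 ε hε
      obtain ⟨l₂, hl₂⟩ := hE2 ε hε
      set σ := l ⊔ l₀ ⊔ l₂ with hσ'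
      have hσl : l ≤ σ := le_trans le_sup_left le_sup_left
      have hσl₀ : l₀ ≤ σ := le_trans le_sup_right le_sup_left
      have hσl₂ : l₂ ≤ σ := le_sup_right
      have hmin_mem : min (L + ε) 1 ∈ Icc (0:ℝ) 1 :=
        ⟨le_min (by linarith [hLmem.1]) zero_le_one, min_le_right _ _⟩
      have h1 : f (tres f (A (x σ) (x σ)) (A (x σ) y)) (A s (x σ)) ≤ A s y := hax s (x σ) y
      have hσdiag : A (x σ) (x σ) ≤ min (L + ε) 1 := by
        have := hl₀ σ σ hσl₀ hσl₀
        rw [abs_lt] at this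
        exact le_min (by linarith) (hmemA _ _).2
      have h2 : tres f (min (L + ε) 1) a ≤ tres f (A (x σ) (x σ)) (A (x σ) y) :=
        tres_mono ht hmin_mem (hmemA _ _) hamem.1 hσdiag (hainner σ hσl)
      have h3 : max (L - ε) 0 ≤ A s (x σ) := max_le (hl₂ σ hσl₂) (hmemA _ _).1
      calc f (tres f (min (L + ε) 1) a) (max (L - ε) 0)
          ≤ f (tres f (min (L + ε) 1) a) (A s (x σ)) :=
            tn_mono2 ht (tres_mem_Icc ht hmin_mem hamem.1) (hmax_mem ε hε) (hmemA _ _) h3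
        _ ≤ f (tres f (A (x σ) (x σ)) (A (x σ) y)) (A s (x σ)) :=
            tn_mono1 ht (tres_mem_Icc ht hmin_mem hamem.1)
              (tres_mem_Icc ht (hmemA _ _) (hmemA _ _).1) (hmemA _ _) h2
        _ ≤ A s y := h1
end

section
/- Let Q = ([0,1],&,1) with & a continuous t-norm and let A be a D(Q)-category. If {x_λ} is a forward Cauchy net in A, φ(x) = ⋁_λ ⋀_{μ≥λ} A(x,x_μ) is the weight generated by {x_λ} with type a = ⋁_λ ⋀_{μ≥λ} A(x_μ,x_μ), and ψ(y) = ⋁_λ ⋀_{μ≥λ} A(x_μ,y) is the generated coweight, then ψ∘φ ≤ A, i.e., (a → ψ(y)) & φ(x) ≤ A(x,y) for all x,y ∈ A₀. -/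
open Set unitInterval

namespace IsContTNorm

variable {f : ℝ → ℝ → ℝ}

theorem apply_mem (ht : IsContTNorm f) {a b : ℝ} (ha : a ∈ I) (hb : b ∈ I) :
    f a b ∈ I :=
  ht.1 a ha b hb

theorem comm (ht : IsContTNorm f) {a b : ℝ} (ha : a ∈ I) (hb : b ∈ I) :
    f a b = f b a :=
  ht.2.2.1 a ha b hb

theorem assoc (ht : IsContTNorm f) {a b c : ℝ} (ha : a ∈ I) (hb : b ∈ I)
    (hc : c ∈ I) : f (f a b) c = f a (f b c) :=
  ht.2.2.2.1 a ha b hb c hc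

theorem mono_left (ht : IsContTNorm f) {a b c : ℝ} (ha : a ∈ I) (hb : b ∈ I)
    (hc : c ∈ I) (hab : a ≤ b) : f a c ≤ f b c :=
  ht.2.2.2.2.1 a ha b hb c hc hab

theorem mono_right (ht : IsContTNorm f) {a b c : ℝ} (ha : a ∈ I) (hb : b ∈ I)
    (hc : c ∈ I) (hbc : b ≤ c) : f a b ≤ f a c := by
  rw [ht.comm ha hb, ht.comm ha hc]
  exact ht.mono_left hb hc ha hbc

theorem apply_one (ht : IsContTNorm f) {a : ℝ} (ha : a ∈ I) : f a 1 = a :=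
  ht.2.2.2.2.2 a ha

theorem apply_zero (ht : IsContTNorm f) {a : ℝ} (ha : a ∈ I) : f a 0 = 0 := by
  have h : f a 0 ≤ f 1 0 := ht.mono_left ha one_mem zero_mem ha.2
  rw [ht.comm one_mem zero_mem, ht.apply_one zero_mem] at h
  exact le_antisymm h (ht.apply_mem ha zero_mem).1

theorem apply_le_left_s10 (ht : IsContTNorm f) {a b : ℝ} (ha : a ∈ I) (hb : b ∈ I) :
    f a b ≤ a := by
  simpa only [ht.apply_one ha] using ht.mono_right ha hb one_mem hb.2

theorem continuousOn_apply (ht : IsContTNorm f) {a : ℝ} (ha : a ∈ I) :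
    ContinuousOn (f a) I :=
  ht.2.1.comp (Continuous.prodMk_right a).continuousOn fun _ hw => ⟨ha, hw⟩

theorem exists_apply_eq (ht : IsContTNorm f) {a s : ℝ} (ha : a ∈ I) (hs : s ∈ Icc 0 a) :
    ∃ w ∈ I, f a w = s := by
  refine intermediate_value_Icc zero_le_one (ht.continuousOn_apply ha) ?_
  rwa [ht.apply_zero ha, ht.apply_one ha]

theorem isGreatest_tres (ht : IsContTNorm f) {a c : ℝ} (ha : a ∈ I) (hc : 0 ≤ c) :
    IsGreatest {z | z ∈ I ∧ f a z ≤ c} (tres f a c) := by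
  have hclosed : IsClosed {z | z ∈ I ∧ f a z ≤ c} :=
    (ht.continuousOn_apply ha).preimage_isClosed_of_isClosed isClosed_Icc isClosed_Iic
  refine hclosed.isGreatest_csSup ⟨0, zero_mem, ?_⟩ ⟨1, fun z hz => hz.1.2⟩
  rwa [ht.apply_zero ha]

theorem tres_mem (ht : IsContTNorm f) {a c : ℝ} (ha : a ∈ I) (hc : 0 ≤ c) :
    tres f a c ∈ I :=
  (ht.isGreatest_tres ha hc).1.1

theorem apply_tres_le (ht : IsContTNorm f) {a c : ℝ} (ha : a ∈ I) (hc : 0 ≤ c) :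
    f a (tres f a c) ≤ c :=
  (ht.isGreatest_tres ha hc).1.2

theorem apply_tres (ht : IsContTNorm f) {a c : ℝ} (ha : a ∈ I) (hc : c ∈ I) :
    f a (tres f a c) = min a c := by
  have hr := ht.tres_mem ha hc.1
  refine le_antisymm (le_min (ht.apply_le_left_s10 ha hr) (ht.apply_tres_le ha hc.1)) ?_
  obtain ⟨w, hw, hfw⟩ := ht.exists_apply_eq ha ⟨le_min ha.1 hc.1, min_le_left a c⟩
  have hwr : w ≤ tres f a c :=
    (ht.isGreatest_tres ha hc.1).2 ⟨hw, hfw.trans_le (min_le_right a c)⟩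
  exact hfw.symm.trans_le (ht.mono_right ha hw hr hwr)

theorem exists_pos_apply_le_add (ht : IsContTNorm f) {ε : ℝ} (hε : 0 < ε) :
    ∃ δ > 0, ∀ z ∈ I, ∀ z' ∈ I, ∀ w ∈ I,
      z ≤ z' + δ → f z w ≤ f z' w + ε := by
  obtain ⟨δ, hδ, H⟩ := Metric.uniformContinuousOn_iff.1
    ((isCompact_Icc.prod isCompact_Icc).uniformContinuousOn_of_continuous ht.2.1) ε hε
  refine ⟨δ / 2, half_pos hδ, fun z hz z' hz' w hw hzz' => ?_⟩
  rcases le_total z z' with hle | hlt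
  · linarith [ht.mono_left hz hz' hw hle]
  · have hdist : dist (z, w) (z', w) < δ := by
      rw [Prod.dist_eq, dist_self, Real.dist_eq, abs_of_nonneg (sub_nonneg.2 hlt)]
      exact max_lt (by linarith) hδ
    linarith [abs_lt.1 (Real.dist_eq _ _ ▸ H (z, w) ⟨hz, hw⟩ (z', w) ⟨hz', hw⟩ hdist)]

/-- Writing `s' = a' & w` and `t = a → c`, the two sides are, up to uniform continuity,
`(a' & t) & w` and `(a' ∧ c') & w`, and `a' & t` is close to `a & t ≤ c`. -/
theorem exists_pos_apply_tres_le_add (ht : IsContTNorm f) {ε : ℝ} (hε : 0 < ε) :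
    ∃ δ > 0, ∀ a ∈ I, ∀ c ∈ I, ∀ s ∈ I,
      ∀ a' ∈ I, ∀ c' ∈ I, ∀ s' ∈ I,
      a' ≤ a + δ → c ≤ c' + δ → s ≤ s' + δ → s' ≤ a' →
      f (tres f a c) s ≤ f (tres f a' c') s' + ε := by
  obtain ⟨η, hη, Hη⟩ := ht.exists_pos_apply_le_add (half_pos hε)
  obtain ⟨δ, hδ, Hδ⟩ := ht.exists_pos_apply_le_add (half_pos hη)
  refine ⟨min δ (η / 2), lt_min hδ (half_pos hη), fun a ha c hc s hs a' ha' c' hc' s' hs'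
    haa' hcc' hss' hsa' => ?_⟩
  have hδη := min_le_left δ (η / 2)
  have hηη := min_le_right δ (η / 2)
  set t := tres f a c
  have htm : t ∈ I := ht.tres_mem ha hc.1
  have hr : tres f a' c' ∈ I := ht.tres_mem ha' hc'.1
  have hmin : min a' c' ∈ I := ⟨le_min ha'.1 hc'.1, (min_le_left _ _).trans ha'.2⟩
  have ha't : f a' t ≤ min a' c' + η := by
    have h₁ := Hδ a' ha' a ha t htm (by linarith)
    have h₂ := ht.apply_tres_le ha hc.1
    rcases min_choice a' c' with h | h <;> rw [h] <;>
      linarith [ht.apply_le_left_s10 ha' htm]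
  obtain ⟨w, hw, rfl⟩ := ht.exists_apply_eq ha' ⟨hs'.1, hsa'⟩
  calc f t s = f s t := ht.comm htm hs
    _ ≤ f (f a' w) t + ε / 2 := Hη s hs _ hs' t htm (by linarith)
    _ = f (f a' t) w + ε / 2 := by
      rw [ht.assoc ha' hw htm, ht.comm hw htm, ← ht.assoc ha' htm hw]
    _ ≤ f (min a' c') w + ε / 2 + ε / 2 := by
      linarith [Hη _ (ht.apply_mem ha' htm) _ hmin w hw ha't]
    _ = f (tres f a' c') (f a' w) + ε := by
      rw [← ht.apply_tres ha' hc', ht.comm ha' hr, ht.assoc hr ha' hw]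
      ring

end IsContTNorm

section NetLiminf

variable {Λ : Type*} [Preorder Λ]

/-- The type, weight and coweight generated by a net are, by definition, `netLiminf` of its
rows. -/
noncomputable def netLiminf (g : Λ → ℝ) : ℝ :=
  ⨆ l : Λ, ⨅ μ : {μ : Λ // l ≤ μ}, g μ.1

theorem iInf_tail_le (g : Λ → ℝ) (hg : BddBelow (range g)) {l μ : Λ} (hμ : l ≤ μ) :
    ⨅ ν : {ν : Λ // l ≤ ν}, g ν.1 ≤ g μ :=
  ciInf_le (hg.mono (range_comp_subset_range Subtype.val g)) (⟨μ, hμ⟩ : {ν : Λ // l ≤ ν})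

theorem iInf_tail_mem_Icc {m M : ℝ} {g : Λ → ℝ} (hg : ∀ μ, g μ ∈ Icc m M) (l : Λ) :
    ⨅ μ : {μ : Λ // l ≤ μ}, g μ.1 ∈ Icc m M :=
  have : Nonempty {μ : Λ // l ≤ μ} := ⟨⟨l, le_rfl⟩⟩
  ⟨le_ciInf fun μ => (hg μ).1,
    (iInf_tail_le g ⟨m, forall_mem_range.2 fun μ => (hg μ).1⟩ le_rfl).trans (hg l).2⟩

theorem netLiminf_mem_Icc [Nonempty Λ] {m M : ℝ} {g : Λ → ℝ} (hg : ∀ μ, g μ ∈ Icc m M) :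
    netLiminf g ∈ Icc m M :=
  ⟨le_ciSup_of_le ⟨M, forall_mem_range.2 fun l => (iInf_tail_mem_Icc hg l).2⟩
      (Classical.arbitrary Λ) (iInf_tail_mem_Icc hg _).1,
    ciSup_le fun l => (iInf_tail_mem_Icc hg l).2⟩

theorem exists_forall_lt_of_lt_netLiminf [Nonempty Λ] {m : ℝ} {g : Λ → ℝ}
    (hg : ∀ μ, m ≤ g μ) {b : ℝ} (hb : b < netLiminf g) : ∃ l, ∀ μ, l ≤ μ → b < g μ := by
  obtain ⟨l, hl⟩ := exists_lt_of_lt_ciSup hb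
  exact ⟨l, fun μ hμ => hl.trans_le (iInf_tail_le g ⟨m, forall_mem_range.2 hg⟩ hμ)⟩

theorem exists_lt_of_netLiminf_lt {m M : ℝ} {g : Λ → ℝ} (hg : ∀ μ, g μ ∈ Icc m M) {b : ℝ}
    (hb : netLiminf g < b) (l : Λ) : ∃ μ, l ≤ μ ∧ g μ < b := by
  have : Nonempty {μ : Λ // l ≤ μ} := ⟨⟨l, le_rfl⟩⟩
  have hle : ⨅ μ : {μ : Λ // l ≤ μ}, g μ.1 ≤ netLiminf g :=
    le_ciSup ⟨M, forall_mem_range.2 fun l' => (iInf_tail_mem_Icc hg l').2⟩ l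
  obtain ⟨⟨μ, hμ⟩, hlt⟩ := exists_lt_of_ciInf_lt (hle.trans_lt hb)
  exact ⟨μ, hμ, hlt⟩

end NetLiminf

theorem stmt10_general (f : ℝ → ℝ → ℝ) (ht : IsContTNorm f)
    {α : Type*} (A : α → α → ℝ) (hA : IsDCat f A)
    {Λ : Type*} [Nonempty Λ] [SemilatticeSup Λ] (x : Λ → α) :
    ∀ u v : α, f (tres f (genType A x) (genCoweight A x v)) (genWeight A x u) ≤ A u v := by
  intro u v
  obtain ⟨hA01, hAle, hAtrans⟩ := hA
  have ha : genType A x ∈ I :=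
    netLiminf_mem_Icc (g := fun μ => A (x μ) (x μ)) fun _ => hA01 _ _
  have hψ : genCoweight A x v ∈ I :=
    netLiminf_mem_Icc (g := fun μ => A (x μ) v) fun _ => hA01 _ _
  have hφ : genWeight A x u ∈ I :=
    netLiminf_mem_Icc (g := fun μ => A u (x μ)) fun _ => hA01 _ _
  refine le_of_forall_pos_le_add fun ε hε => ?_
  obtain ⟨δ, hδ, H⟩ := ht.exists_pos_apply_tres_le_add hε
  obtain ⟨l₁, hl₁⟩ := exists_forall_lt_of_lt_netLiminf (g := fun μ => A (x μ) v)
    (fun _ => (hA01 _ _).1) (sub_lt_self (genCoweight A x v) hδ)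
  obtain ⟨l₂, hl₂⟩ := exists_forall_lt_of_lt_netLiminf (g := fun μ => A u (x μ))
    (fun _ => (hA01 _ _).1) (sub_lt_self (genWeight A x u) hδ)
  obtain ⟨μ, hμ, hμa⟩ := exists_lt_of_netLiminf_lt (g := fun μ => A (x μ) (x μ))
    (fun _ => hA01 _ _) (lt_add_of_pos_right (genType A x) hδ) (l₁ ⊔ l₂)
  have hψμ := hl₁ μ (le_sup_left.trans hμ)
  have hφμ := hl₂ μ (le_sup_right.trans hμ)
  calc _ ≤ f (tres f (A (x μ) (x μ)) (A (x μ) v)) (A u (x μ)) + ε :=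
        H _ ha _ hψ _ hφ _ (hA01 _ _) _ (hA01 _ _) _ (hA01 _ _) hμa.le
          (by linarith) (by linarith) ((hAle u (x μ)).trans (min_le_right _ _))
    _ ≤ A u v + ε := by linarith [hAtrans u (x μ) v]

/-- for a forward Cauchy net `x` with generated weight `φ`, coweight `ψ`
and type `a`, we have `ψ ∘ φ ≤ A`, i.e. `(a → ψ(y)) & φ(x) ≤ A(x,y)`. -/
theorem stmt10 (f : ℝ → ℝ → ℝ) (ht : IsContTNorm f)
    {α : Type*} (A : α → α → ℝ) (hA : IsDCat f A)
    {Λ : Type*} [Nonempty Λ] [SemilatticeSup Λ] (x : Λ → α)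
    (hfc : FwdCauchy A x) :
    ∀ u v : α, f (tres f (genType A x) (genCoweight A x v)) (genWeight A x u) ≤ A u v :=
  stmt10_general f ht A hA x
end

section
/- Let & be a continuous t-norm on [0,1] with a non-trivial idempotent element a ∈ (0,1). Then there exists a D(Q)-category A (for Q = ([0,1],&,1)) and a Cauchy weight φ on A that is not forward Cauchy. Concretely: take b ∈ (a,1), let A have two objects x,y with A(x,x)=b and A(x,y)=A(y,x)=A(y,y)=0; then φ(x)=a, φ(y)=0 defines a Cauchy weight of type a with left adjoint ψ(x)=a, ψ(y)=0, but φ is not generated by any forward Cauchy net in A. -/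
/-- The two-object ordered fuzzy set with `A(x,x) = b` and all other homs `0`
(`true` plays the role of `x`, `false` of `y`). -/
def A14 (b : ℝ) : Bool → Bool → ℝ := fun u v => if u = true ∧ v = true then b else 0

/-- The weight `φ(x) = a`, `φ(y) = 0` (which is also the left adjoint coweight `ψ`). -/
def phi14 (a : ℝ) : Bool → ℝ := fun u => if u = true then a else 0

/-! Residuation gives `a ≤ b → a`, so idempotency of `a` yields `(b → a) & a ≥ a & a = a`:
this is `φ ∘ ψ ≥ a`, and `φ` is Cauchy. But the diagonal of `A` only takes the values `b` and `0`,
so the type `⋁_λ ⋀_{μ ≥ λ} A(x_μ, x_μ)` of any net is `≥ b` (if the net is eventually at `x`) or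
`≤ 0`, and never equals `a`. -/

section TNorm

variable {f : ℝ → ℝ → ℝ}

theorem tres_mem_Icc_s14 (f : ℝ → ℝ → ℝ) (c d : ℝ) : tres f c d ∈ Set.Icc (0:ℝ) 1 :=
  ⟨Real.sSup_nonneg fun _ hz => hz.1.1, Real.sSup_le (fun _ hz => hz.1.2) zero_le_one⟩

theorem le_tres {c d z : ℝ} (hz : z ∈ Set.Icc (0:ℝ) 1) (h : f c z ≤ d) : z ≤ tres f c d :=
  le_csSup ⟨1, fun _ hw => hw.1.2⟩ ⟨hz, h⟩

namespace IsContTNorm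

theorem mul_le_right (hT : IsContTNorm f) {s t : ℝ} (hs : s ∈ Set.Icc (0:ℝ) 1)
    (ht : t ∈ Set.Icc (0:ℝ) 1) : f s t ≤ t :=
  calc f s t ≤ f 1 t := hT.2.2.2.2.1 s hs 1 (Set.right_mem_Icc.2 zero_le_one) t ht hs.2
    _ = f t 1 := hT.2.2.1 1 (Set.right_mem_Icc.2 zero_le_one) t ht
    _ = t := hT.2.2.2.2.2 t ht

theorem mul_le_mul_right (hT : IsContTNorm f) {s t u : ℝ} (hs : s ∈ Set.Icc (0:ℝ) 1)
    (ht : t ∈ Set.Icc (0:ℝ) 1) (hu : u ∈ Set.Icc (0:ℝ) 1) (htu : t ≤ u) : f s t ≤ f s u := by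
  rw [hT.2.2.1 s hs t ht, hT.2.2.1 s hs u hu]
  exact hT.2.2.2.2.1 t ht u hu s hs htu

theorem tres_mul_zero_le (hT : IsContTNorm f) (c d : ℝ) : f (tres f c d) 0 ≤ 0 :=
  hT.mul_le_right (tres_mem_Icc_s14 f c d) (Set.left_mem_Icc.2 zero_le_one)

theorem continuousOn_mul_left (hT : IsContTNorm f) {c : ℝ} (hc : c ∈ Set.Icc (0:ℝ) 1) :
    ContinuousOn (f c) (Set.Icc 0 1) :=
  hT.2.1.comp (Continuous.prodMk_right c).continuousOn fun _ hz => ⟨hc, hz⟩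

/-- The supremum defining `tres` is attained, by continuity of `f c`. -/
theorem mul_tres_le (hT : IsContTNorm f) {c d : ℝ} (hc : c ∈ Set.Icc (0:ℝ) 1) (hd : 0 ≤ d) :
    f c (tres f c d) ≤ d := by
  have hclosed : IsClosed {z | z ∈ Set.Icc (0:ℝ) 1 ∧ f c z ≤ d} :=
    (hT.continuousOn_mul_left hc).preimage_isClosed_of_isClosed isClosed_Icc isClosed_Iic
  have hzero : f c 0 ≤ d :=
    (hT.mul_le_right hc (Set.left_mem_Icc.2 zero_le_one)).trans hd
  exact (hclosed.csSup_mem ⟨0, Set.left_mem_Icc.2 zero_le_one, hzero⟩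
    ⟨1, fun _ hz => hz.1.2⟩).2

theorem tres_mul_le (hT : IsContTNorm f) {c d : ℝ} (hc : c ∈ Set.Icc (0:ℝ) 1) (hd : 0 ≤ d) :
    f (tres f c d) c ≤ d :=
  hT.2.2.1 _ (tres_mem_Icc_s14 f c d) c hc ▸ hT.mul_tres_le hc hd

end IsContTNorm

end TNorm

section Example

variable {f : ℝ → ℝ → ℝ} {a b : ℝ}

theorem isDCat_A14 (hT : IsContTNorm f) (hb : b ∈ Set.Icc (0:ℝ) 1) : IsDCat f (A14 b) := by
  refine ⟨fun u v => ?_, fun u v => ?_, fun u v w => ?_⟩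
  · unfold A14; split_ifs <;> simp [hb.1, hb.2]
  · cases u <;> cases v <;> simp [A14, hb.1]
  · by_cases huv : u = true ∧ v = true
    · obtain ⟨rfl, rfl⟩ := huv
      have hw : 0 ≤ A14 b true w := by cases w <;> simp [A14, hb.1]
      simpa [A14] using hT.tres_mul_le hb hw
    · simp only [A14, if_neg huv]
      have hw : 0 ≤ A14 b u w := by unfold A14; split_ifs <;> simp [hb.1]
      exact (hT.tres_mul_zero_le _ _).trans hw

theorem phi14_le_min (ha : 0 ≤ a) (hab : a ≤ b) (u : Bool) : phi14 a u ≤ min a (A14 b u u) := by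
  cases u <;> simp [phi14, A14, ha, hab]

theorem phi14_le_A14 (hab : a ≤ b) (v : Bool) : phi14 a v ≤ A14 b true v := by
  cases v <;> simp [phi14, A14, hab]

theorem phi14_isWeight (hT : IsContTNorm f) (ha : 0 ≤ a) (hb : b ∈ Set.Icc (0:ℝ) 1)
    (u v : Bool) :
    f (tres f (A14 b v v) (phi14 a v)) (A14 b u v) ≤ phi14 a u := by
  by_cases huv : u = true ∧ v = true
  · obtain ⟨rfl, rfl⟩ := huv
    simpa [A14, phi14] using hT.tres_mul_le hb ha
  · have hu : 0 ≤ phi14 a u := by cases u <;> simp [phi14, ha]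
    simpa only [A14, if_neg huv] using (hT.tres_mul_zero_le _ _).trans hu

theorem phi14_isCoweight (hT : IsContTNorm f) (ha : a ∈ Set.Icc (0:ℝ) 1) (hab : a ≤ b)
    (hb : b ∈ Set.Icc (0:ℝ) 1) (u v : Bool) :
    f (tres f (A14 b u u) (A14 b u v)) (phi14 a u) ≤ phi14 a v := by
  cases u
  · cases v <;> simpa [phi14] using (hT.tres_mul_zero_le _ _).trans (by simp [ha.1])
  cases v
  · simp only [A14, phi14]
    calc f (tres f b 0) a ≤ f (tres f b 0) b :=
          hT.mul_le_mul_right (tres_mem_Icc_s14 f b 0) ha hb hab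
      _ ≤ 0 := hT.tres_mul_le hb le_rfl
  · simpa [A14, phi14] using hT.mul_le_right (tres_mem_Icc_s14 f b b) ha

theorem phi14_comp_phi14_le_A14 (hT : IsContTNorm f) (ha : a ∈ Set.Icc (0:ℝ) 1) (hab : a ≤ b)
    (u v : Bool) : f (tres f a (phi14 a v)) (phi14 a u) ≤ A14 b u v := by
  have hv : 0 ≤ phi14 a v := by cases v <;> simp [phi14, ha.1]
  cases u
  · have huv : 0 ≤ A14 b false v := by simp [A14]
    simpa [phi14] using (hT.tres_mul_zero_le _ _).trans huv
  · simpa [phi14] using (hT.tres_mul_le ha hv).trans (phi14_le_A14 hab v)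

theorem le_iSup_phi14_comp_phi14 (hT : IsContTNorm f) (ha : a ∈ Set.Icc (0:ℝ) 1)
    (hid : f a a = a) (hb : b ∈ Set.Icc (0:ℝ) 1) :
    a ≤ ⨆ u : Bool, f (tres f (A14 b u u) (phi14 a u)) (phi14 a u) := by
  have htres : a ≤ tres f b a := le_tres ha (hT.mul_le_right hb ha)
  calc a = f a a := hid.symm
    _ ≤ f (tres f b a) a := hT.2.2.2.2.1 a ha _ (tres_mem_Icc_s14 f b a) a ha htres
    _ ≤ ⨆ u : Bool, f (tres f (A14 b u u) (phi14 a u)) (phi14 a u) :=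
      le_ciSup (f := fun u : Bool => f (tres f (A14 b u u) (phi14 a u)) (phi14 a u))
        (Set.finite_range _).bddAbove true

theorem netType_A14_nonpos_or_ge {Λ : Type*} {le : Λ → Λ → Prop} (hrefl : ∀ l, le l l)
    [Nonempty Λ] (x : Λ → Bool) (hb : 0 ≤ b) :
    (⨆ l : Λ, ⨅ σ : {σ : Λ // le l σ}, A14 b (x σ.1) (x σ.1)) ≤ 0 ∨
      b ≤ ⨆ l : Λ, ⨅ σ : {σ : Λ // le l σ}, A14 b (x σ.1) (x σ.1) := by
  have hdiag : ∀ u, A14 b u u ∈ Set.Icc 0 b := fun u => by cases u <;> simp [A14, hb]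
  have hbdd : ∀ l, BddBelow (Set.range fun σ : {σ : Λ // le l σ} => A14 b (x σ.1) (x σ.1)) :=
    fun l => ⟨0, by rintro _ ⟨σ, rfl⟩; exact (hdiag _).1⟩
  by_cases hev : ∃ l, ∀ σ, le l σ → x σ = true
  · right
    obtain ⟨l, hl⟩ := hev
    have : Nonempty {σ : Λ // le l σ} := ⟨⟨l, hrefl l⟩⟩
    have hinf : b ≤ ⨅ σ : {σ : Λ // le l σ}, A14 b (x σ.1) (x σ.1) :=
      le_ciInf fun σ => by simp [A14, hl σ.1 σ.2]
    have hbddAbove : BddAbove (Set.range fun l : Λ =>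
        ⨅ σ : {σ : Λ // le l σ}, A14 b (x σ.1) (x σ.1)) := by
      refine ⟨b, ?_⟩
      rintro _ ⟨l', rfl⟩
      exact ciInf_le_of_le (hbdd l') ⟨l', hrefl l'⟩ (hdiag _).2
    exact hinf.trans (le_ciSup hbddAbove l)
  · left
    push Not at hev
    refine ciSup_le fun l => ?_
    obtain ⟨σ, hσ, hxσ⟩ := hev l
    exact ciInf_le_of_le (hbdd l) ⟨σ, hσ⟩ (by simp [A14, hxσ])

end Example

/-- if `a ∈ (0,1)` is a non-trivial idempotent of `f` and `b ∈ (a,1)`,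
then `A14 b` is a D(Q)-category, `phi14 a` is a Cauchy weight of type `a` on it
(with left adjoint `phi14 a`), yet `phi14 a` is not generated by any forward
Cauchy net. -/
theorem stmt14 (f : ℝ → ℝ → ℝ) (ht : IsContTNorm f)
    (a : ℝ) (ha : a ∈ Set.Ioo (0:ℝ) 1) (hid : f a a = a)
    (b : ℝ) (hb : b ∈ Set.Ioo a 1) :
    IsDCat f (A14 b) ∧
    -- φ is a weight of type a and ψ := φ is a coweight of type a
    (∀ u, phi14 a u ≤ min a (A14 b u u)) ∧
    (∀ u v, f (tres f (A14 b v v) (phi14 a v)) (A14 b u v) ≤ phi14 a u) ∧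
    (∀ u v, f (tres f (A14 b u u) (A14 b u v)) (phi14 a u) ≤ phi14 a v) ∧
    -- adjunction: ψ ∘ φ ≤ A and φ ∘ ψ ≥ a, so φ is Cauchy
    (∀ u v, f (tres f a (phi14 a v)) (phi14 a u) ≤ A14 b u v) ∧
    (a ≤ ⨆ u : Bool, f (tres f (A14 b u u) (phi14 a u)) (phi14 a u)) ∧
    -- but φ is not forward Cauchy: no forward Cauchy net generates it
    ¬ ∃ (Λ : Type) (le : Λ → Λ → Prop),
        (∀ l, le l l) ∧ (∀ i j k, le i j → le j k → le i k) ∧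
        (∀ i j, ∃ k, le i k ∧ le j k) ∧ Nonempty Λ ∧
        ∃ x : Λ → Bool,
          (∃ L : ℝ, ∀ ε > (0:ℝ), ∃ l₀ : Λ, ∀ μ ν : Λ, le l₀ μ → le μ ν →
            |A14 b (x μ) (x ν) - L| < ε) ∧
          (∀ u, phi14 a u = ⨆ l : Λ, ⨅ σ : {σ : Λ // le l σ}, A14 b u (x σ.1)) ∧
          (a = ⨆ l : Λ, ⨅ σ : {σ : Λ // le l σ}, A14 b (x σ.1) (x σ.1)) := by
  have haI : a ∈ Set.Icc (0:ℝ) 1 := Set.Ioo_subset_Icc_self ha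
  have hbI : b ∈ Set.Icc (0:ℝ) 1 := ⟨ha.1.le.trans hb.1.le, hb.2.le⟩
  refine ⟨isDCat_A14 ht hbI, phi14_le_min haI.1 hb.1.le, phi14_isWeight ht haI.1 hbI,
    phi14_isCoweight ht haI hb.1.le hbI, phi14_comp_phi14_le_A14 ht haI hb.1.le,
    le_iSup_phi14_comp_phi14 ht haI hid hbI, ?_⟩
  rintro ⟨Λ, le, hrefl, -, -, hΛ, x, -, -, htype⟩
  rcases netType_A14_nonpos_or_ge hrefl x hbI.1 with hneg | hge
  · linarith [ha.1]
  · linarith [hb.1]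
end

section
/- Let X be a generalized partial metric space and φ a weight on X with finite type tφ < ∞. If φ is flat, then φ satisfies: (a) inf over x with φ(x) < ∞ of (φ(x) − X(x,x)) equals 0; and (b) whenever φ(x_i) < X(x_i,x_i) + δ_i for i=1,2, there exist y ∈ X and ε > 0 with φ(y) < X(y,y) + ε and X(x_i,y) + ε < X(x_i,x_i) + δ_i for i=1,2. -/
/-!
Rewrite `φ ∘ ψ` as `⨅ x, (φ x - X(x,x)) + ψ x`. Flatness on the top coweight of
type `tφ` gives `(⨅ (φ x - X(x,x))) + tφ ≤ tφ`, which is (a) since `tφ < ∞`. For (b), the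
representable coweights `X(xᵢ, -) + eᵢ` compose with `φ` to `φ(xᵢ) + eᵢ` (Yoneda); choosing the
shifts `eᵢ` so that both values equal `M = max (φ x₁) (φ x₂)`, flatness says the composite with
their pointwise maximum is `M` too, and a point `y` almost attaining this infimum satisfies
`(φ y - X(y,y)) + X(xᵢ,y) < φ xᵢ + ε` for both `i`. The required `ε` is then
`(φ y - X(y,y)) + η` for a small `η > 0`.
-/

open Filter Topology
open scoped ENNReal

/-- Coweights of type `b` on a generalized partial metric space `p`. -/
def IsCoweightGPM {X : Type*} (p : X → X → ℝ≥0∞) (b : ℝ≥0∞) (ψ : X → ℝ≥0∞) : Prop :=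
  (∀ x, max (p x x) b ≤ ψ x) ∧ ∀ x y, ψ y ≤ p x y + (ψ x - p x x)

/-- Composition `φ ∘ ψ` of a weight after a coweight. -/
noncomputable def compGPM {X : Type*} (p : X → X → ℝ≥0∞) (φ ψ : X → ℝ≥0∞) : ℝ≥0∞ :=
  ⨅ x, φ x + (ψ x - p x x)

structure IsGenPartialMetric {X : Type*} (p : X → X → ℝ≥0∞) : Prop where
  self_le_left : ∀ x y, p x x ≤ p x y
  self_le_right : ∀ x y, p y y ≤ p x y
  triangle : ∀ x y z, p x z ≤ p y z + (p x y - p y y)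

namespace ENNReal

theorem add_tsub_eq_tsub_add {a b c : ℝ≥0∞} (ha : c ≤ a) (hb : c ≤ b) :
    a + (b - c) = a - c + b := by
  by_cases hc : c = ⊤
  · simp_all
  · rw [← (ENNReal.cancel_of_ne hc).add_tsub_assoc_of_le hb, ENNReal.sub_add_eq_add_sub ha hc]

theorem exists_pos_add_lt_and {a₁ a₂ b₁ b₂ : ℝ≥0∞} (h₁ : a₁ < b₁) (h₂ : a₂ < b₂) :
    ∃ ε, 0 < ε ∧ a₁ + ε < b₁ ∧ a₂ + ε < b₂ := by
  obtain ⟨r₁, hr₁, h₁⟩ := ENNReal.lt_iff_exists_add_pos_lt.mp h₁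
  obtain ⟨r₂, hr₂, h₂⟩ := ENNReal.lt_iff_exists_add_pos_lt.mp h₂
  refine ⟨(min r₁ r₂ : NNReal), by exact_mod_cast lt_min hr₁ hr₂, ?_, ?_⟩
  · exact lt_of_le_of_lt (add_le_add_right (by exact_mod_cast min_le_left r₁ r₂) _) h₁
  · exact lt_of_le_of_lt (add_le_add_right (by exact_mod_cast min_le_right r₁ r₂) _) h₂

end ENNReal

section GPM

variable {X : Type*} {p : X → X → ℝ≥0∞} {φ : X → ℝ≥0∞}

theorem compGPM_eq_iInf {ψ : X → ℝ≥0∞} (hφ : ∀ x, p x x ≤ φ x) (hψ : ∀ x, p x x ≤ ψ x) :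
    compGPM p φ ψ = ⨅ x, φ x - p x x + ψ x :=
  iInf_congr fun x => ENNReal.add_tsub_eq_tsub_add (hφ x) (hψ x)

theorem iInf_tsub_eq_zero_of_compGPM_eq {t : ℝ≥0∞} (hφ : ∀ x, p x x ≤ φ x) (ht : t ≠ ⊤)
    (hcomp : compGPM p φ (fun x => max t (p x x)) = t) :
    ⨅ x : {x : X // φ x < ⊤}, (φ x.1 - p x.1 x.1) = 0 := by
  rw [compGPM_eq_iInf hφ fun x => le_max_right _ _] at hcomp
  have hle : (⨅ x : {x : X // φ x < ⊤}, (φ x.1 - p x.1 x.1)) + t ≤ 0 + t := by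
    rw [zero_add]
    refine (le_iInf fun x => ?_).trans_eq hcomp
    by_cases hx : φ x < ⊤
    · exact add_le_add (iInf_le_of_le ⟨x, hx⟩ le_rfl) (le_max_left _ _)
    · rw [not_lt_top_iff.mp hx]
      by_cases hpx : p x x = ⊤ <;> simp [hpx]
  exact (ENNReal.le_of_add_le_add_right ht hle).antisymm zero_le

theorem IsGenPartialMetric.isCoweightGPM_add_const (hp : IsGenPartialMetric p) (x₀ : X)
    (e : ℝ≥0∞) {b : ℝ≥0∞} (hb : b ≤ p x₀ x₀ + e) : IsCoweightGPM p b (fun z => p x₀ z + e) := by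
  refine ⟨fun z => max_le ((hp.self_le_right x₀ z).trans le_self_add)
    (hb.trans (add_le_add_left (hp.self_le_left x₀ z) e)), fun z w => ?_⟩
  by_cases hz : p z z = ⊤
  · simp [top_le_iff.mp (hz ▸ hp.self_le_left z w)]
  · rw [← ENNReal.sub_add_eq_add_sub (hp.self_le_right x₀ z) hz, ← add_assoc]
    exact add_le_add_left (hp.triangle x₀ z w) e

theorem compGPM_add_const (hp : IsGenPartialMetric p) (hφ : ∀ x, p x x ≤ φ x)
    (hw : ∀ x y, φ x ≤ p x y + (φ y - p y y)) (x₀ : X) (e : ℝ≥0∞) :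
    compGPM p φ (fun z => p x₀ z + e) = φ x₀ + e := by
  rw [compGPM_eq_iInf hφ fun z => (hp.self_le_right x₀ z).trans le_self_add]
  refine le_antisymm (iInf_le_of_le x₀ ?_) (le_iInf fun z => ?_)
  · rw [← add_assoc, tsub_add_cancel_of_le (hφ x₀)]
  · rw [← add_assoc]
    gcongr
    rw [add_comm]
    exact hw x₀ z

theorem exists_tsub_add_lt_of_flat (hp : IsGenPartialMetric p) (hφ : ∀ x, p x x ≤ φ x)
    (hw : ∀ x y, φ x ≤ p x y + (φ y - p y y))
    (hflat : ∀ ψ₁ ψ₂ : X → ℝ≥0∞, IsCoweightGPM p 0 ψ₁ → IsCoweightGPM p 0 ψ₂ →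
      compGPM p φ (fun x => max (ψ₁ x) (ψ₂ x)) = max (compGPM p φ ψ₁) (compGPM p φ ψ₂))
    {x₁ x₂ : X} (h₁ : φ x₁ ≠ ⊤) (h₂ : φ x₂ ≠ ⊤) {ε : ℝ≥0∞} (hε : ε ≠ 0) :
    ∃ y, φ y - p y y + p x₁ y < φ x₁ + ε ∧ φ y - p y y + p x₂ y < φ x₂ + ε := by
  set M := max (φ x₁) (φ x₂)
  have hM : M ≠ ⊤ := max_ne_top h₁ h₂
  have hcomp := hflat _ _ (hp.isCoweightGPM_add_const x₁ (M - φ x₁) zero_le)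
    (hp.isCoweightGPM_add_const x₂ (M - φ x₂) zero_le)
  rw [compGPM_add_const hp hφ hw, compGPM_add_const hp hφ hw,
    add_tsub_cancel_of_le (le_max_left _ _), add_tsub_cancel_of_le (le_max_right _ _), max_self,
    compGPM_eq_iInf hφ fun z => (hp.self_le_right x₁ z).trans (le_self_add.trans (le_max_left _ _))]
    at hcomp
  obtain ⟨y, hy⟩ := iInf_lt_iff.mp (hcomp.trans_lt (ENNReal.lt_add_right hM hε))
  have key : ∀ x, φ x ≤ M →
      p x y + (M - φ x) ≤ max (p x₁ y + (M - φ x₁)) (p x₂ y + (M - φ x₂)) →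
      φ y - p y y + p x y < φ x + ε := by
    intro x hxM hle
    refine (ENNReal.add_lt_add_iff_right (ENNReal.sub_ne_top (b := φ x) hM)).mp ?_
    calc φ y - p y y + p x y + (M - φ x)
        ≤ φ y - p y y + max (p x₁ y + (M - φ x₁)) (p x₂ y + (M - φ x₂)) := by
          rw [add_assoc]; gcongr
      _ < M + ε := hy
      _ = φ x + ε + (M - φ x) := by rw [add_right_comm, add_tsub_cancel_of_le hxM]
  exact ⟨y, key x₁ (le_max_left _ _) (le_max_left _ _),
    key x₂ (le_max_right _ _) (le_max_right _ _)⟩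

end GPM

/-- a flat weight `φ` of finite type on a generalized partial metric
space satisfies conditions (a) and (b). -/
theorem stmt16 {X : Type*} (p : X → X → ℝ≥0∞)
    (h1 : ∀ x y, p x x ≤ p x y) (h1' : ∀ x y, p y y ≤ p x y)
    (h2 : ∀ x y z, p x z ≤ p y z + (p x y - p y y))
    (tφ : ℝ≥0∞) (htφ : tφ < ⊤) (φ : X → ℝ≥0∞)
    (hw1 : ∀ x y, φ x ≤ p x y + (φ y - p y y))
    (hw2 : ∀ x, max (p x x) tφ ≤ φ x)
    -- flatness: φ∘(−) preserves finite meets of coweights of each type b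
    (hflat1 : ∀ b : ℝ≥0∞, compGPM p φ (fun x => max b (p x x)) = max b tφ)
    (hflat2 : ∀ (b : ℝ≥0∞) (ψ₁ ψ₂ : X → ℝ≥0∞), IsCoweightGPM p b ψ₁ → IsCoweightGPM p b ψ₂ →
      compGPM p φ (fun x => max (ψ₁ x) (ψ₂ x)) = max (compGPM p φ ψ₁) (compGPM p φ ψ₂)) :
    ((⨅ x : {x : X // φ x < ⊤}, (φ x.1 - p x.1 x.1)) = 0) ∧
    (∀ (x₁ x₂ : X) (δ₁ δ₂ : ℝ≥0∞), φ x₁ < p x₁ x₁ + δ₁ → φ x₂ < p x₂ x₂ + δ₂ →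
      ∃ (y : X) (ε : ℝ≥0∞), 0 < ε ∧ φ y < p y y + ε ∧
        p x₁ y + ε < p x₁ x₁ + δ₁ ∧ p x₂ y + ε < p x₂ x₂ + δ₂) := by
  have hp : IsGenPartialMetric p := ⟨h1, h1', h2⟩
  have hφ : ∀ x, p x x ≤ φ x := fun x => (le_max_left _ _).trans (hw2 x)
  refine ⟨iInf_tsub_eq_zero_of_compGPM_eq hφ htφ.ne (by rw [hflat1, max_self]), ?_⟩
  intro x₁ x₂ δ₁ δ₂ hx₁ hx₂
  obtain ⟨ε, hε, hε₁, hε₂⟩ := ENNReal.exists_pos_add_lt_and hx₁ hx₂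
  obtain ⟨y, hy₁, hy₂⟩ :=
    exists_tsub_add_lt_of_flat hp hφ hw1 (hflat2 0) hx₁.ne_top hx₂.ne_top hε.ne'
  obtain ⟨η, hη, hη₁, hη₂⟩ := ENNReal.exists_pos_add_lt_and (hy₁.trans hε₁) (hy₂.trans hε₂)
  have hφy : φ y ≠ ⊤ := ne_top_of_le_ne_top (hy₁.trans hε₁).ne_top
    (le_tsub_add.trans (add_le_add_right (hp.self_le_right x₁ y) _))
  refine ⟨y, φ y - p y y + η, hη.trans_le le_add_self, ?_, ?_, ?_⟩
  · rw [← add_assoc, add_tsub_cancel_of_le (hφ y)]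
    exact ENNReal.lt_add_right hφy hη.ne'
  · rwa [← add_assoc, add_comm (p x₁ y)]
  · rwa [← add_assoc, add_comm (p x₂ y)]
end
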